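/- arXiv:1109.2326 — 4 statements merged into one kernel-verified Lean document; each statement's English description precedes it below -/
import Mathlib

section
/- For q ∈ (0,1) and any half-integers l ≥ 0 and n with -l-1/2 ≤ n ≤ l+1/2, the bound (1 + [l+1/2]_q^2 q^{2n})^{-1/2} q^n ≤ [l+1/2]_q^{-1} holds, where [x]_q = (q^{-x} - q^x)/(q - q^{-1}). -/
/-- For `q ∈ (0,1)` and half-integers `l ≥ 0`, `n` with `-l-1/2 ≤ n ≤ l+1/2`,
one has `(1 + [l+1/2]_q² q^{2n})^{-1/2} q^n ≤ [l+1/2]_q⁻¹`, where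
`[x]_q = (q^{-x}-q^x)/(q⁻¹-q) > 0`. -/
theorem stmt_6 (q : ℝ) (hq0 : 0 < q) (hq1 : q < 1) (l n : ℝ)
    (hl : ∃ m : ℕ, l = (m : ℝ) / 2) (hn : ∃ k : ℤ, n = (k : ℝ) / 2)
    (hn1 : -l - 1 / 2 ≤ n) (hn2 : n ≤ l + 1 / 2) :
    (1 + ((q ^ (-(l + 1 / 2)) - q ^ (l + 1 / 2)) / (q⁻¹ - q)) ^ 2 * q ^ (2 * n)) ^ (-(1 / 2) : ℝ) *
        q ^ n ≤
      ((q ^ (-(l + 1 / 2)) - q ^ (l + 1 / 2)) / (q⁻¹ - q))⁻¹ := by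
  obtain ⟨m, hm⟩ := hl
  have hl0 : 0 ≤ l := by rw [hm]; positivity
  set A : ℝ := (q ^ (-(l + 1 / 2)) - q ^ (l + 1 / 2)) / (q⁻¹ - q) with hA
  have hden : 0 < q⁻¹ - q := by
    have h := mul_inv_cancel₀ hq0.ne'
    nlinarith
  have hnum : 0 < q ^ (-(l + 1 / 2)) - q ^ (l + 1 / 2) := by
    have : q ^ (l + 1 / 2) < q ^ (-(l + 1 / 2)) :=
      Real.rpow_lt_rpow_of_exponent_gt hq0 hq1 (by linarith)
    linarith
  have hApos : 0 < A := div_pos hnum hden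
  have hqn : (0:ℝ) < q ^ n := Real.rpow_pos_of_pos hq0 n
  have hq2n : q ^ (2 * n) = (q ^ n) ^ 2 := by
    rw [← Real.rpow_natCast (q ^ n) 2, ← Real.rpow_mul hq0.le]
    norm_num
    ring_nf
  set P : ℝ := 1 + A ^ 2 * q ^ (2 * n) with hP
  have hPpos : 0 < P := by positivity
  have key : A * q ^ n ≤ Real.sqrt P := by
    have h1 : A * q ^ n = Real.sqrt ((A * q ^ n) ^ 2) := (Real.sqrt_sq (by positivity)).symm
    rw [h1]
    apply Real.sqrt_le_sqrt
    rw [hP, hq2n]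
    nlinarith
  have hsqrt : 0 < Real.sqrt P := Real.sqrt_pos.mpr hPpos
  have hrw : P ^ (-(1 / 2) : ℝ) = (Real.sqrt P)⁻¹ := by
    rw [Real.rpow_neg hPpos.le, Real.sqrt_eq_rpow]
  rw [hrw, inv_mul_le_iff₀ hsqrt, le_mul_inv_iff₀ hApos]
  nlinarith
end

section
/- In M_2(U_q(su_2)), the square of the matrix D (with diagonal entries (q^{-1}k^2-1)/(q-q^{-1}), (1-qk^2)/(q-q^{-1}) and off-diagonal entries ek·q^{1/2}, fk·q^{-1/2}) equals c_q·Δ^2, where c_q = ef + (q^{-1}-q)^{-2}(q^{1/2}k^{-1} - q^{-1/2}k)^2 is the quantum Casimir and Δ = diag(kq^{-1/2}, kq^{1/2}). -/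
set_option maxHeartbeats 2000000

open Matrix

/-- In `M₂(U_q(su_2))`, `D² = c_q Δ²`, where `c_q` is the quantum Casimir and
`Δ = diag(kq^{-1/2}, kq^{1/2})`; `c_q • Δ²` is entrywise left multiplication by `c_q`. -/
theorem stmt_11 (q : ℝ) (hq0 : 0 < q) (hq1 : q < 1)
    (A : Type*) [Ring A] [Algebra ℂ A] (e f k k' : A)
    (h1 : k' * k = 1) (h2 : k * k' = 1)
    (h3 : k * e = (q : ℂ) • (e * k)) (h4 : k * f = ((q : ℂ))⁻¹ • (f * k))
    (h5 : e * f - f * e = ((q : ℂ) - (q : ℂ)⁻¹)⁻¹ • (k ^ 2 - k' ^ 2)) :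
    (!![((q : ℂ) - (q : ℂ)⁻¹)⁻¹ • ((q : ℂ)⁻¹ • k ^ 2 - 1),
          (Real.sqrt q : ℂ) • (e * k);
        ((Real.sqrt q : ℂ))⁻¹ • (f * k),
          ((q : ℂ) - (q : ℂ)⁻¹)⁻¹ • (1 - (q : ℂ) • k ^ 2)] : Matrix (Fin 2) (Fin 2) A) ^ 2 =
      (e * f + (((q : ℂ)⁻¹ - (q : ℂ)) ^ 2)⁻¹ •
          ((Real.sqrt q : ℂ) • k' - ((Real.sqrt q : ℂ))⁻¹ • k) ^ 2) •
        (!![((Real.sqrt q : ℂ))⁻¹ • k, 0; 0, (Real.sqrt q : ℂ) • k] :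
            Matrix (Fin 2) (Fin 2) A) ^ 2 := by
  have hq : (q : ℂ) ≠ 0 := by exact_mod_cast hq0.ne'
  have hqr : Real.sqrt q ≠ 0 := by positivity
  have ht0 : ((Real.sqrt q : ℝ) : ℂ) ≠ 0 := by exact_mod_cast hqr
  have hs : ((Real.sqrt q : ℝ) : ℂ) ^ 2 = (q : ℂ) := by
    norm_cast; exact Real.sq_sqrt hq0.le
  have hq1' : (q : ℂ) ^ 2 ≠ 1 := by
    have : q ^ 2 ≠ 1 := by nlinarith
    exact_mod_cast this
  have hqq : (q : ℂ) - (q : ℂ)⁻¹ ≠ 0 := by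
    intro h
    apply hq1'
    field_simp at h
    linear_combination h
  have hqq' : ((Real.sqrt q : ℝ) : ℂ) ^ 2 - (((Real.sqrt q : ℝ) : ℂ) ^ 2)⁻¹ ≠ 0 := by
    rw [hs]; exact hqq
  have h41 : ((Real.sqrt q : ℝ) : ℂ) ^ 4 - 1 ≠ 0 := by
    intro h
    apply hq1'
    rw [← hs]
    linear_combination h
  have h14 : (1 : ℂ) - ((Real.sqrt q : ℝ) : ℂ) ^ 4 ≠ 0 := by
    intro h; apply h41; linear_combination -h
  have hqq'' : (((Real.sqrt q : ℝ) : ℂ) ^ 2)⁻¹ - ((Real.sqrt q : ℝ) : ℂ) ^ 2 ≠ 0 := by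
    intro h
    apply hqq'
    linear_combination -h
  have h14sq : ((1 : ℂ) - ((Real.sqrt q : ℝ) : ℂ) ^ 4) ^ 2 ≠ 0 := pow_ne_zero 2 h14
  have hne3 : (1 : ℂ) - ((Real.sqrt q : ℝ) : ℂ) ^ 4 * 2 + ((Real.sqrt q : ℝ) : ℂ) ^ 8 ≠ 0 := by
    intro h; apply h14sq; linear_combination h
  have hne1 : ((Real.sqrt q : ℝ) : ℂ) ^ 2 - ((Real.sqrt q : ℝ) : ℂ) ^ 6 * 2 + ((Real.sqrt q : ℝ) : ℂ) ^ 10 ≠ 0 := by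
    intro h
    apply mul_ne_zero (pow_ne_zero 2 ht0) hne3
    linear_combination h
  have hne2 : ((Real.sqrt q : ℝ) : ℂ) ^ 4 - ((Real.sqrt q : ℝ) : ℂ) ^ 8 * 2 + ((Real.sqrt q : ℝ) : ℂ) ^ 12 ≠ 0 := by
    intro h
    apply mul_ne_zero (pow_ne_zero 4 ht0) hne3
    linear_combination h
  have hne4 : -((Real.sqrt q : ℝ) : ℂ) + ((Real.sqrt q : ℝ) : ℂ) ^ 5 ≠ 0 := by
    intro h
    apply mul_ne_zero ht0 h41
    linear_combination h
  set l : ℂ := ((q : ℂ) - (q : ℂ)⁻¹)⁻¹ with hl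
  -- commutation helpers
  have hke : ∀ x : A, k * (e * x) = (q : ℂ) • (e * (k * x)) := fun x => by
    rw [← mul_assoc, h3, smul_mul_assoc, mul_assoc]
  have hkf : ∀ x : A, k * (f * x) = ((q : ℂ))⁻¹ • (f * (k * x)) := fun x => by
    rw [← mul_assoc, h4, smul_mul_assoc, mul_assoc]
  have hk'k : ∀ x : A, k' * (k * x) = x := fun x => by
    rw [← mul_assoc, h1, one_mul]
  have hkk' : ∀ x : A, k * (k' * x) = x := fun x => by
    rw [← mul_assoc, h2, one_mul]
  have hfe0 : f * e = e * f - l • (k * k) + l • (k' * k') := by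
    have h5' : e * f - f * e = l • (k * k) - l • (k' * k') := by
      simpa only [pow_two, smul_sub] using h5
    have : f * e = e * f - (e * f - f * e) := by abel
    rw [this, h5']; abel
  have hfe : ∀ x : A, f * (e * x) =
      e * (f * x) - l • (k * (k * x)) + l • (k' * (k' * x)) := fun x => by
    rw [← mul_assoc f, ← mul_assoc e, ← mul_assoc k, ← mul_assoc k', hfe0,
      add_mul, sub_mul, smul_mul_assoc, smul_mul_assoc]
  ext i j
  fin_cases i <;> fin_cases j <;>
    simp only [pow_two, Matrix.mul_apply, Fin.sum_univ_two, Matrix.smul_apply,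
      smul_eq_mul, Fin.mk_zero, Fin.mk_one, Fin.isValue, Matrix.cons_val', Matrix.cons_val_zero, Matrix.cons_val_one,
      Matrix.head_cons, Matrix.head_fin_const, Matrix.empty_val',
      Matrix.cons_val_fin_one, Matrix.of_apply] <;>
    simp only [mul_assoc, smul_mul_assoc, mul_smul_comm, smul_smul, smul_add, smul_sub,
      mul_sub, sub_mul, mul_add, add_mul, mul_one, one_mul, mul_zero, zero_mul,
      add_zero, zero_add, sub_zero, hke, hkf, hk'k, hkk', hfe, h3, h4, h1, h2] <;>
    match_scalars <;>
    (try simp only [hl, ← hs]) <;>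
    field_simp [ht0, hqq', hqq'', h41, h14] <;>
    (try ring) <;>
    (try tauto) <;>
    field_simp [hne1, hne2, hne3, hne4] <;>
    ring
end

section
/- For q ∈ (0,1), the function ζ_q(z) = (q^{-1} - q)^z · ∑_{j=0}^∞ binom(z+j-1, j) · (q^{z-1/2+j} + q^{j+1/2})(1 - q^{2j+z}) / ((1 - q^{z-1/2+j})^2 (1 - q^{j+1/2})^2) defines a meromorphic function on ℂ whose poles are contained in the set {1/2 - m + 2πi·n/log q : m ∈ ℕ∪{0}, n ∈ ℤ}, and the series converges locally uniformly away from these poles. -/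
open Complex Finset Filter

namespace Stmt16

noncomputable def tm (q : ℝ) (j : ℕ) (z : ℂ) : ℂ :=
  (∏ i ∈ Finset.range j, (z + (i : ℂ))) / (j.factorial : ℂ) *
    ((Complex.exp ((z - 1 / 2 + (j : ℂ)) * Real.log q) +
        Complex.exp (((j : ℂ) + 1 / 2) * Real.log q)) *
      (1 - Complex.exp ((2 * (j : ℂ) + z) * Real.log q))) /
    ((1 - Complex.exp ((z - 1 / 2 + (j : ℂ)) * Real.log q)) ^ 2 *
      (1 - Complex.exp (((j : ℂ) + 1 / 2) * Real.log q)) ^ 2)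

lemma norm_cexp_mul_log (L : ℝ) (w : ℂ) :
    ‖Complex.exp (w * (L : ℂ))‖ = Real.exp (w.re * L) := by
  rw [Complex.norm_exp]
  congr 1
  simp [Complex.mul_re]

lemma c_eq (q : ℝ) (j : ℕ) :
    (1 : ℂ) - Complex.exp (((j : ℂ) + 1 / 2) * Real.log q) =
      ((1 - Real.exp (((j : ℝ) + 1 / 2) * Real.log q) : ℝ) : ℂ) := by
  rw [show ((j : ℂ) + 1 / 2) * (Real.log q : ℂ) = ((((j : ℝ) + 1 / 2) * Real.log q : ℝ) : ℂ) by
    push_cast; ring, ← Complex.ofReal_exp]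
  push_cast; ring

lemma d_eq_zero_iff {q : ℝ} (hq0 : 0 < q) (hq1 : q < 1) (j : ℕ) (z : ℂ) :
    1 - Complex.exp ((z - 1 / 2 + (j : ℂ)) * Real.log q) = 0 ↔
      ∃ n : ℤ, z = 1 / 2 - (j : ℂ) + 2 * Real.pi * Complex.I * (n : ℂ) / Real.log q := by
  have hL : Real.log q ≠ 0 := ne_of_lt (Real.log_neg hq0 hq1)
  have hL' : (Real.log q : ℂ) ≠ 0 := Complex.ofReal_ne_zero.2 hL
  rw [sub_eq_zero, eq_comm, Complex.exp_eq_one_iff]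
  refine exists_congr fun n => ?_
  constructor
  · intro h
    field_simp
    linear_combination 2 * h
  · intro h
    field_simp at h
    linear_combination (1/2 : ℂ) * h

end Stmt16

namespace Stmt16

/-- the candidate pole points -/
noncomputable def pt (q : ℝ) (m : ℕ) (n : ℤ) : ℂ :=
  1 / 2 - (m : ℂ) + 2 * Real.pi * Complex.I * (n : ℂ) / Real.log q

lemma pt_re_im {q : ℝ} (hq0 : 0 < q) (hq1 : q < 1) (m : ℕ) (n : ℤ) :
    (pt q m n).re = 1 / 2 - m ∧ (pt q m n).im = 2 * Real.pi * n / Real.log q := by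
  have hL : Real.log q ≠ 0 := ne_of_lt (Real.log_neg hq0 hq1)
  have key : pt q m n =
      ((1 / 2 - m : ℝ) : ℂ) + ((2 * Real.pi * n / Real.log q : ℝ) : ℂ) * Complex.I := by
    unfold pt
    push_cast
    field_simp
  rw [key]
  constructor <;> simp

lemma pt_sep {q : ℝ} (hq0 : 0 < q) (hq1 : q < 1) {m m' : ℕ} {n n' : ℤ}
    (h : (m, n) ≠ (m', n')) :
    min 1 (2 * Real.pi / (-Real.log q)) ≤ dist (pt q m n) (pt q m' n') := by
  have hL : Real.log q < 0 := Real.log_neg hq0 hq1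
  have hpi : (0:ℝ) < Real.pi := Real.pi_pos
  rcases eq_or_ne m m' with hm | hm
  · subst hm
    have hn : n ≠ n' := by simpa [Prod.ext_iff] using h
    have him : |(pt q m n - pt q m n').im| = 2 * Real.pi * |(n : ℝ) - n'| / (-Real.log q) := by
      rw [Complex.sub_im, (pt_re_im hq0 hq1 m n).2, (pt_re_im hq0 hq1 m n').2]
      rw [div_sub_div_same, abs_div, abs_of_neg hL]
      rw [show 2 * Real.pi * ↑n - 2 * Real.pi * ↑n' = 2 * Real.pi * ((n:ℝ) - n') by ring]
      rw [abs_mul, abs_of_pos (by positivity : (0:ℝ) < 2 * Real.pi)]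
    have h1 : (1:ℝ) ≤ |(n : ℝ) - n'| := by
      have : (n : ℝ) - n' = ((n - n' : ℤ) : ℝ) := by push_cast; ring
      rw [this, ← Int.cast_abs]
      exact_mod_cast Int.one_le_abs (sub_ne_zero.2 hn)
    have : 2 * Real.pi / (-Real.log q) ≤ |(pt q m n - pt q m n').im| := by
      rw [him]
      rw [div_le_div_iff_of_pos_right (by linarith)]
      nlinarith
    calc min 1 (2 * Real.pi / (-Real.log q)) ≤ 2 * Real.pi / (-Real.log q) := min_le_right _ _
      _ ≤ |(pt q m n - pt q m n').im| := this
      _ ≤ ‖pt q m n - pt q m n'‖ := Complex.abs_im_le_norm _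
      _ = dist (pt q m n) (pt q m n') := (dist_eq_norm _ _).symm
  · have hre : |(pt q m n - pt q m' n').re| = |(m':ℝ) - m| := by
      rw [Complex.sub_re, (pt_re_im hq0 hq1 m n).1, (pt_re_im hq0 hq1 m' n').1]
      rw [show 1/2 - (m:ℝ) - (1/2 - m') = (m':ℝ) - m by ring]
    have h1 : (1:ℝ) ≤ |(m' : ℝ) - m| := by
      have : (m' : ℝ) - m = ((m' - m : ℤ) : ℝ) := by push_cast; ring
      rw [this, ← Int.cast_abs]
      have : m' - (m:ℤ) ≠ 0 := sub_ne_zero.2 (by exact_mod_cast Ne.symm hm)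
      exact_mod_cast Int.one_le_abs this
    calc min 1 (2 * Real.pi / (-Real.log q)) ≤ 1 := min_le_left _ _
      _ ≤ |(pt q m n - pt q m' n').re| := by rw [hre]; exact h1
      _ ≤ ‖pt q m n - pt q m' n'‖ := Complex.abs_re_le_norm _
      _ = dist (pt q m n) (pt q m' n') := (dist_eq_norm _ _).symm

end Stmt16

namespace Stmt16

noncomputable def SS (q : ℝ) : Set ℂ := {z : ℂ | ∃ m : ℕ, ∃ n : ℤ, z = pt q m n}

lemma rho_pos {q : ℝ} (hq0 : 0 < q) (hq1 : q < 1) :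
    0 < min 1 (2 * Real.pi / (-Real.log q)) := by
  have hL : Real.log q < 0 := Real.log_neg hq0 hq1
  have : (0:ℝ) < Real.pi := Real.pi_pos
  have hL' : (0:ℝ) < -Real.log q := by linarith
  apply lt_min one_pos
  positivity

lemma isolated {q : ℝ} (hq0 : 0 < q) (hq1 : q < 1) (z : ℂ) :
    ∃ ε > 0, ∀ w ∈ SS q, w ≠ z → ε ≤ dist z w := by
  set ρ := min 1 (2 * Real.pi / (-Real.log q)) with hρ
  have hρ0 : 0 < ρ := rho_pos hq0 hq1
  by_cases h : ∃ w ∈ SS q, w ≠ z ∧ dist z w < ρ / 2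
  · obtain ⟨w₀, hw₀S, hw₀z, hw₀d⟩ := h
    refine ⟨min (dist z w₀) (ρ / 2), lt_min (dist_pos.2 (Ne.symm hw₀z)) (by linarith), ?_⟩
    intro w hwS hwz
    rcases eq_or_ne w w₀ with rfl | hww
    · exact min_le_left _ _
    · refine le_trans (min_le_right _ _) ?_
      by_contra hc
      push_neg at hc
      obtain ⟨m, n, rfl⟩ := hwS
      obtain ⟨m', n', rfl⟩ := hw₀S
      have hne : (m, n) ≠ (m', n') := by
        intro he
        apply hww
        simp only [Prod.ext_iff] at he
        rw [show m = m' from he.1, show n = n' from he.2]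
      have := pt_sep hq0 hq1 hne
      have htr : dist (pt q m n) (pt q m' n') ≤ dist z (pt q m n) + dist z (pt q m' n') :=
        dist_triangle_left _ _ _
      rw [← hρ] at this
      linarith
  · push_neg at h
    refine ⟨ρ / 2, by linarith, ?_⟩
    intro w hwS hwz
    exact le_of_not_gt fun hc => absurd hc (by simpa using h w hwS hwz)

lemma SS_closed {q : ℝ} (hq0 : 0 < q) (hq1 : q < 1) : IsClosed (SS q) := by
  rw [← isOpen_compl_iff, Metric.isOpen_iff]
  intro z hz
  obtain ⟨ε, hε0, hε⟩ := isolated hq0 hq1 z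
  refine ⟨ε, hε0, ?_⟩
  intro w hw hwS
  have hwz : w ≠ z := fun he => hz (he ▸ hwS)
  have := hε w hwS hwz
  rw [Metric.mem_ball, dist_comm] at hw
  linarith

end Stmt16

namespace Stmt16

lemma tm_norm_bound {q : ℝ} (hq0 : 0 < q) (hq1 : q < 1) (R : ℝ) (hR : 0 ≤ R)
    (δ : ℝ) (hδ : 0 < δ) :
    ∃ u : ℕ → ℝ, Summable u ∧ (∀ j, 0 ≤ u j) ∧ ∀ (j : ℕ) (z : ℂ), ‖z‖ ≤ R →
      δ ≤ ‖1 - Complex.exp ((z - 1 / 2 + (j : ℂ)) * Real.log q)‖ → ‖tm q j z‖ ≤ u j := by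
  have hL : Real.log q < 0 := Real.log_neg hq0 hq1
  have hexpL : Real.exp (Real.log q) = q := Real.exp_log hq0
  set A : ℝ := Real.exp ((-R - 1/2) * Real.log q) with hA
  set B : ℝ := 1 + Real.exp (-R * Real.log q) with hB
  set E : ℝ := Real.exp ((1/2 : ℝ) * Real.log q) with hE
  have hE1 : E < 1 := Real.exp_lt_one_iff.2 (by nlinarith)
  have hE0 : 0 < 1 - E := by linarith
  refine ⟨fun j => ((∏ i ∈ Finset.range j, (R + i)) / (j.factorial : ℝ)) *
      ((A + 1) * q ^ j * B) / (δ ^ 2 * (1 - E) ^ 2), ?_, ?_, ?_⟩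
  · -- summability
    set C : ℝ := (A + 1) * B / (δ ^ 2 * (1 - E) ^ 2) with hC
    have heq : (fun j => ((∏ i ∈ Finset.range j, (R + i)) / (j.factorial : ℝ)) *
        ((A + 1) * q ^ j * B) / (δ ^ 2 * (1 - E) ^ 2)) =
        fun j => C * (((∏ i ∈ Finset.range j, (R + i)) / (j.factorial : ℝ)) * q ^ j) := by
      funext j; rw [hC]; ring
    rw [heq]
    apply Summable.mul_left
    set w : ℕ → ℝ := fun j => ((∏ i ∈ Finset.range j, (R + i)) / (j.factorial : ℝ)) * q ^ j
      with hw
    have hw0 : ∀ j, 0 ≤ w j := by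
      intro j
      apply mul_nonneg (div_nonneg (Finset.prod_nonneg fun i _ => by positivity) (by positivity))
      positivity
    have hr : (1 + q) / 2 < 1 := by linarith
    have hrq : 0 < (1 + q) / 2 - q := by linarith
    apply summable_of_ratio_norm_eventually_le hr
    obtain ⟨N, hN⟩ := exists_nat_ge ((R * q) / ((1 + q) / 2 - q))
    filter_upwards [eventually_ge_atTop N] with j hj
    have hjN : ((R * q) / ((1 + q) / 2 - q)) ≤ (j : ℝ) := le_trans hN (by exact_mod_cast hj)
    have hkey : (R + j) * q ≤ (1 + q) / 2 * (j + 1) := by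
      rw [div_le_iff₀ hrq] at hjN
      nlinarith
    have hsucc : w (j + 1) = w j * ((R + j) * q / (j + 1)) := by
      rw [hw]
      simp only [Finset.prod_range_succ, Nat.factorial_succ]
      push_cast
      field_simp
      ring
    rw [Real.norm_eq_abs, Real.norm_eq_abs, _root_.abs_of_nonneg (hw0 _), _root_.abs_of_nonneg (hw0 _),
      hsucc, mul_comm ((1+q)/2) (w j)]
    apply mul_le_mul_of_nonneg_left _ (hw0 j)
    rw [div_le_iff₀ (by positivity : (0:ℝ) < (j:ℝ) + 1)]
    linarith
  · -- nonnegativity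
    intro j
    have : 0 ≤ ∏ i ∈ Finset.range j, (R + i) := Finset.prod_nonneg fun i _ => by positivity
    have hA0 : 0 < A := Real.exp_pos _
    have hB0 : 0 < B := by rw [hB]; positivity
    positivity
  · -- the bound
    intro j z hz hd
    have hzre : -R ≤ z.re := by
      have := abs_le.1 (le_trans (Complex.abs_re_le_norm z) hz)
      linarith [this.1]
    have hnum1 : ‖Complex.exp ((z - 1 / 2 + (j : ℂ)) * (Real.log q : ℂ))‖ ≤ A * q ^ j := by
      rw [norm_cexp_mul_log]
      have hre : (z - 1 / 2 + (j : ℂ)).re = z.re - 1/2 + j := by simp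
      rw [hre, hA]
      calc Real.exp ((z.re - 1/2 + j) * Real.log q) ≤ Real.exp ((-R - 1/2 + j) * Real.log q) := by
            apply Real.exp_le_exp.2; nlinarith
        _ = Real.exp ((-R - 1/2) * Real.log q) * Real.exp ((j : ℝ) * Real.log q) := by
            rw [← Real.exp_add]; ring_nf
        _ = Real.exp ((-R - 1/2) * Real.log q) * q ^ j := by
            rw [show ((j:ℝ) * Real.log q) = (j : ℕ) * Real.log q by norm_num, Real.exp_nat_mul, hexpL]
    have hnum2 : ‖Complex.exp (((j : ℂ) + 1 / 2) * (Real.log q : ℂ))‖ ≤ q ^ j := by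
      rw [norm_cexp_mul_log]
      have hre : ((j : ℂ) + 1 / 2).re = (j : ℝ) + 1/2 := by simp
      rw [hre]
      calc Real.exp (((j:ℝ) + 1/2) * Real.log q) ≤ Real.exp ((j : ℝ) * Real.log q) := by
            apply Real.exp_le_exp.2; nlinarith
        _ = q ^ j := by rw [show ((j:ℝ) * Real.log q) = (j : ℕ) * Real.log q by norm_num,
            Real.exp_nat_mul, hexpL]
    have hnum3 : ‖(1 : ℂ) - Complex.exp ((2 * (j : ℂ) + z) * (Real.log q : ℂ))‖ ≤ B := by
      calc ‖(1 : ℂ) - Complex.exp ((2 * (j : ℂ) + z) * (Real.log q : ℂ))‖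
          ≤ ‖(1:ℂ)‖ + ‖Complex.exp ((2 * (j : ℂ) + z) * (Real.log q : ℂ))‖ := norm_sub_le _ _
        _ ≤ 1 + Real.exp (-R * Real.log q) := by
            rw [norm_one, norm_cexp_mul_log]
            have hre : (2 * (j : ℂ) + z).re = 2 * j + z.re := by simp
            rw [hre]
            have : Real.exp ((2 * (j:ℝ) + z.re) * Real.log q) ≤ Real.exp (-R * Real.log q) := by
              apply Real.exp_le_exp.2
              nlinarith [Nat.cast_nonneg (α := ℝ) j]
            linarith
        _ = B := hB.symm
    have hcnorm : 1 - E ≤ ‖(1 : ℂ) - Complex.exp (((j : ℂ) + 1 / 2) * (Real.log q : ℂ))‖ := by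
      rw [c_eq q j, Complex.norm_real, Real.norm_eq_abs]
      have hlt : Real.exp (((j:ℝ) + 1/2) * Real.log q) ≤ E := by
        rw [hE]
        apply Real.exp_le_exp.2
        nlinarith [Nat.cast_nonneg (α := ℝ) j]
      have hpos : 0 < Real.exp (((j:ℝ) + 1/2) * Real.log q) := Real.exp_pos _
      rw [_root_.abs_of_nonneg (by linarith [hE1] : (0:ℝ) ≤ 1 - Real.exp (((j:ℝ) + 1/2) * Real.log q))]
      linarith
    have hprod : ‖∏ i ∈ Finset.range j, (z + (i : ℂ))‖ ≤ ∏ i ∈ Finset.range j, (R + i) := by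
      rw [norm_prod]
      apply Finset.prod_le_prod (fun i _ => norm_nonneg _)
      intro i _
      calc ‖z + (i : ℂ)‖ ≤ ‖z‖ + ‖(i : ℂ)‖ := norm_add_le _ _
        _ ≤ R + i := by
            have : ‖(i : ℂ)‖ = (i : ℝ) := by simp
            linarith
    have hq2 : 0 < q ^ j := by positivity
    have hA0 : 0 < A := Real.exp_pos _
    have hB0 : 0 < B := by rw [hB]; positivity
    rw [tm]
    have hfact : ‖((j.factorial : ℕ) : ℂ)‖ = (j.factorial : ℝ) := by simp
    simp only [norm_div, norm_mul, norm_pow, hfact]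
    have hprod0 : (0:ℝ) ≤ ∏ i ∈ Finset.range j, (R + i) :=
      Finset.prod_nonneg fun i _ => by positivity
    gcongr
    · calc ‖Complex.exp ((z - 1 / 2 + (j : ℂ)) * (Real.log q : ℂ)) +
            Complex.exp (((j : ℂ) + 1 / 2) * (Real.log q : ℂ))‖
          ≤ ‖Complex.exp ((z - 1 / 2 + (j : ℂ)) * (Real.log q : ℂ))‖ +
            ‖Complex.exp (((j : ℂ) + 1 / 2) * (Real.log q : ℂ))‖ := norm_add_le _ _
        _ ≤ A * q ^ j + q ^ j := add_le_add hnum1 hnum2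
        _ = (A + 1) * q ^ j := by ring

end Stmt16

namespace Stmt16

lemma tm_differentiableAt {q : ℝ} (hq0 : 0 < q) (hq1 : q < 1) (j : ℕ) {z : ℂ}
    (hd : 1 - Complex.exp ((z - 1 / 2 + (j : ℂ)) * Real.log q) ≠ 0) :
    DifferentiableAt ℂ (tm q j) z := by
  have hc : (1 : ℂ) - Complex.exp (((j : ℂ) + 1 / 2) * Real.log q) ≠ 0 := by
    rw [c_eq q j]
    have : Real.exp (((j : ℝ) + 1 / 2) * Real.log q) < 1 := by
      rw [Real.exp_lt_one_iff]
      have hL : Real.log q < 0 := Real.log_neg hq0 hq1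
      nlinarith [Nat.cast_nonneg (α := ℝ) j]
    intro h
    rw [Complex.ofReal_eq_zero] at h
    linarith
  unfold tm
  apply DifferentiableAt.div
  · apply DifferentiableAt.mul
    · apply DifferentiableAt.div_const
      apply DifferentiableAt.fun_finsetProd
      intro i _
      exact differentiableAt_id.add_const _
    · apply DifferentiableAt.mul
      · apply DifferentiableAt.add
        · apply DifferentiableAt.cexp
          exact (differentiableAt_id.sub_const _).add_const _ |>.mul_const _
        · exact differentiableAt_const _
      · apply DifferentiableAt.const_sub
        apply DifferentiableAt.cexp
        exact (differentiableAt_id.const_add _).mul_const _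
  · apply DifferentiableAt.mul
    · apply DifferentiableAt.pow
      apply DifferentiableAt.const_sub
      apply DifferentiableAt.cexp
      exact (differentiableAt_id.sub_const _).add_const _ |>.mul_const _
    · exact differentiableAt_const _
  · exact mul_ne_zero (pow_ne_zero _ hd) (pow_ne_zero _ hc)

/-- main uniform convergence package -/
lemma unif {q : ℝ} (hq0 : 0 < q) (hq1 : q < 1) (P : ℕ → Prop) [DecidablePred P]
    (K : Set ℂ) (hK : IsCompact K)
    (hKd : ∀ z ∈ K, ∀ j, P j →
      1 - Complex.exp ((z - 1 / 2 + (j : ℂ)) * Real.log q) ≠ 0) :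
    TendstoUniformlyOn (fun N z => ∑ j ∈ Finset.range N, if P j then tm q j z else 0)
      (fun z => ∑' j, if P j then tm q j z else 0) Filter.atTop K ∧
    ∀ z ∈ K, Summable (fun j => if P j then tm q j z else 0) := by
  rcases K.eq_empty_or_nonempty with rfl | hKne
  · exact ⟨tendstoUniformlyOn_empty, fun z hz => absurd hz (Set.notMem_empty z)⟩
  obtain ⟨R, hRsub⟩ := (Metric.isBounded_iff_subset_closedBall 0).1 hK.isBounded
  have hRb : ∀ z ∈ K, ‖z‖ ≤ max R 0 := by
    intro z hz
    have := hRsub hz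
    rw [Metric.mem_closedBall, dist_zero_right] at this
    exact le_trans this (le_max_left _ _)
  set R' := max R 0 with hR'
  have hR0 : 0 ≤ R' := le_max_right _ _
  have hL : Real.log q < 0 := Real.log_neg hq0 hq1
  -- tail index: for j ≥ j₀ the exponential is at most 1/2
  have htail : ∃ j₀ : ℕ, ∀ j ≥ j₀, Real.exp ((-R' - 1/2 + j) * Real.log q) ≤ 1/2 := by
    have h1 : Filter.Tendsto (fun j : ℕ => Real.exp ((-R' - 1/2) * Real.log q) * q ^ j)
        Filter.atTop (nhds 0) := by
      rw [show (0:ℝ) = Real.exp ((-R' - 1/2) * Real.log q) * 0 by ring]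
      exact (tendsto_pow_atTop_nhds_zero_of_lt_one hq0.le hq1).const_mul _
    have h2 := h1.eventually_le_const (show (0:ℝ) < 1/2 by norm_num)
    obtain ⟨j₀, hj₀⟩ := h2.exists_forall_of_atTop
    refine ⟨j₀, fun j hj => ?_⟩
    have heq : Real.exp ((-R' - 1/2 + j) * Real.log q) =
        Real.exp ((-R' - 1/2) * Real.log q) * q ^ j := by
      rw [← Real.exp_log hq0, ← Real.exp_nat_mul, ← Real.exp_add]
      congr 1
      rw [Real.exp_log hq0]
      ring
    rw [heq]
    exact hj₀ j hj
  obtain ⟨j₀, hj₀⟩ := htail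
  -- lower bound for the tail denominators
  have htaillb : ∀ z ∈ K, ∀ j, j₀ ≤ j →
      (1/2 : ℝ) ≤ ‖1 - Complex.exp ((z - 1 / 2 + (j : ℂ)) * Real.log q)‖ := by
    intro z hz j hj
    have h1 : ‖Complex.exp ((z - 1 / 2 + (j : ℂ)) * Real.log q)‖ ≤ 1/2 := by
      rw [norm_cexp_mul_log]
      refine le_trans ?_ (hj₀ j hj)
      apply Real.exp_le_exp.2
      have hzre : -R' ≤ z.re := by
        have := abs_le.1 (le_trans (Complex.abs_re_le_norm z) (hRb z hz))
        simp at this ⊢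
        linarith [this.1]
      have hre2 : (z - 1/2 + (j:ℂ)).re = z.re - 1/2 + (j:ℝ) := by simp
      rw [hre2]
      have : -R' - 1/2 + (j:ℝ) ≤ z.re - 1/2 + (j:ℝ) := by linarith
      exact mul_le_mul_of_nonpos_right this hL.le
    calc (1/2 : ℝ) = 1 - 1/2 := by norm_num
      _ ≤ ‖(1:ℂ)‖ - ‖Complex.exp ((z - 1 / 2 + (j : ℂ)) * Real.log q)‖ := by
          rw [norm_one]; linarith
      _ ≤ ‖1 - Complex.exp ((z - 1 / 2 + (j : ℂ)) * Real.log q)‖ := norm_sub_norm_le _ _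
  -- lower bounds for small indices
  have hsmall : ∀ j : ℕ, ∃ δ > 0, (P j →
      ∀ z ∈ K, δ ≤ ‖1 - Complex.exp ((z - 1 / 2 + (j : ℂ)) * Real.log q)‖) := by
    intro j
    by_cases hPj : P j
    · have hcont : ContinuousOn
          (fun z => ‖1 - Complex.exp ((z - 1 / 2 + (j : ℂ)) * Real.log q)‖) K := by
        apply Continuous.continuousOn
        continuity
      obtain ⟨z₀, hz₀K, hz₀min⟩ := hK.exists_isMinOn hKne hcont
      refine ⟨‖1 - Complex.exp ((z₀ - 1 / 2 + (j : ℂ)) * Real.log q)‖, ?_, ?_⟩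
      · exact norm_pos_iff.mpr (hKd z₀ hz₀K j hPj)
      · intro _ z hz
        exact hz₀min hz
    · exact ⟨1, one_pos, fun hPj' => absurd hPj' hPj⟩
  choose δf hδfpos hδfle using hsmall
  set T : Finset ℝ := insert (1/2 : ℝ) ((Finset.range j₀).image δf) with hT
  have hTne : T.Nonempty := ⟨1/2, Finset.mem_insert_self _ _⟩
  set δ : ℝ := T.min' hTne with hδdef
  have hδpos : 0 < δ := by
    apply (Finset.lt_min'_iff T hTne).2
    intro y hy
    rcases Finset.mem_insert.1 hy with rfl | hy'
    · norm_num
    · obtain ⟨i, _, rfl⟩ := Finset.mem_image.1 hy'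
      exact hδfpos i
  have hδglobal : ∀ z ∈ K, ∀ j, P j →
      δ ≤ ‖1 - Complex.exp ((z - 1 / 2 + (j : ℂ)) * Real.log q)‖ := by
    intro z hz j hPj
    rcases lt_or_ge j j₀ with hj | hj
    · refine le_trans (Finset.min'_le T _ ?_) (hδfle j hPj z hz)
      exact Finset.mem_insert_of_mem (Finset.mem_image_of_mem δf (Finset.mem_range.2 hj))
    · refine le_trans (Finset.min'_le T _ (Finset.mem_insert_self _ _)) (htaillb z hz j hj)
  obtain ⟨u, hu, hu0, hub⟩ := tm_norm_bound hq0 hq1 R' hR0 δ hδpos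
  have hbound : ∀ (j : ℕ), ∀ z ∈ K, ‖if P j then tm q j z else 0‖ ≤ u j := by
    intro j z hz
    by_cases hPj : P j
    · rw [if_pos hPj]
      exact hub j z (hRb z hz) (hδglobal z hz j hPj)
    · rw [if_neg hPj, norm_zero]
      exact hu0 j
  constructor
  · exact tendstoUniformlyOn_tsum_nat hu hbound
  · intro z hz
    exact Summable.of_norm_bounded hu (fun j => hbound j z hz)

end Stmt16


open Stmt16 in
/-- The `q`-zeta function `ζ_q(z) = (q⁻¹-q)^z ∑_j binom(z+j-1,j)
(q^{z-1/2+j}+q^{j+1/2})(1-q^{2j+z})/((1-q^{z-1/2+j})²(1-q^{j+1/2})²)` is meromorphic on ℂ,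
analytic away from `{1/2 - m + 2πin/log q}`, and the series converges locally uniformly there. -/
theorem stmt_16 (q : ℝ) (hq0 : 0 < q) (hq1 : q < 1)
    (S : Set ℂ)
    (hS : S = {z : ℂ | ∃ m : ℕ, ∃ nn : ℤ,
      z = 1 / 2 - (m : ℂ) + 2 * Real.pi * Complex.I * (nn : ℂ) / Real.log q})
    (term : ℕ → ℂ → ℂ)
    (hterm : term = fun j z =>
      (∏ i ∈ Finset.range j, (z + (i : ℂ))) / (j.factorial : ℂ) *
        ((Complex.exp ((z - 1 / 2 + (j : ℂ)) * Real.log q) +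
            Complex.exp (((j : ℂ) + 1 / 2) * Real.log q)) *
          (1 - Complex.exp ((2 * (j : ℂ) + z) * Real.log q))) /
        ((1 - Complex.exp ((z - 1 / 2 + (j : ℂ)) * Real.log q)) ^ 2 *
          (1 - Complex.exp (((j : ℂ) + 1 / 2) * Real.log q)) ^ 2))
    (F : ℂ → ℂ)
    (hF : F = fun z => Complex.exp (z * Real.log (q⁻¹ - q)) * ∑' j : ℕ, term j z) :
    MeromorphicOn F Set.univ ∧
    (∀ z ∉ S, AnalyticAt ℂ F z) ∧
    TendstoLocallyUniformlyOn (fun (N : ℕ) (z : ℂ) => ∑ j ∈ Finset.range N, term j z)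
      (fun z => ∑' j : ℕ, term j z) Filter.atTop Sᶜ := by
  have hterm' : term = tm q := hterm
  have hSS : S = SS q := hS
  have hSclosed : IsClosed S := hSS ▸ SS_closed hq0 hq1
  have hopen : IsOpen Sᶜ := hSclosed.isOpen_compl
  have hd_ne : ∀ z ∉ S, ∀ j : ℕ,
      1 - Complex.exp ((z - 1 / 2 + (j : ℂ)) * Real.log q) ≠ 0 := by
    intro z hz j h0
    obtain ⟨n, hn⟩ := (d_eq_zero_iff hq0 hq1 j z).1 h0
    exact hz (hS ▸ ⟨j, n, hn⟩)
  have hEdiff : Differentiable ℂ (fun w : ℂ => Complex.exp (w * Real.log (q⁻¹ - q))) :=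
    (differentiable_id.mul_const _).cexp
  -- Part 3: locally uniform convergence
  have hconv : TendstoLocallyUniformlyOn
      (fun (N : ℕ) (z : ℂ) => ∑ j ∈ Finset.range N, term j z)
      (fun z => ∑' j : ℕ, term j z) Filter.atTop Sᶜ := by
    rw [hterm', tendstoLocallyUniformlyOn_iff_forall_isCompact hopen]
    intro K hKs hK
    have h := (unif hq0 hq1 (fun _ => True) K hK
      (fun z hz j _ => hd_ne z (hKs hz) j)).1
    simpa using h
  -- Part 2: analyticity away from S
  have han : ∀ z ∉ S, AnalyticAt ℂ F z := by
    intro z hz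
    obtain ⟨ε, hε0, hball⟩ := Metric.isOpen_iff.1 hopen z hz
    have hr0 : 0 < ε / 2 := by linarith
    have hKsub : Metric.closedBall z (ε/2) ⊆ Sᶜ :=
      subset_trans (Metric.closedBall_subset_ball (by linarith)) hball
    have hu := (unif hq0 hq1 (fun _ => True) (Metric.closedBall z (ε/2))
      (isCompact_closedBall _ _) (fun w hw j _ => hd_ne w (hKsub hw) j)).1
    have hlu := (hu.mono Metric.ball_subset_closedBall).tendstoLocallyUniformlyOn
    have hdiff : ∀ N : ℕ, DifferentiableOn ℂ
        (fun w => ∑ j ∈ Finset.range N, if True then tm q j w else 0)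
        (Metric.ball z (ε/2)) := by
      intro N w hw
      apply DifferentiableAt.differentiableWithinAt
      apply DifferentiableAt.fun_sum
      intro j _
      simp only [if_true]
      exact tm_differentiableAt hq0 hq1 j
        (hd_ne w (hKsub (Metric.ball_subset_closedBall hw)) j)
    have hg := hlu.differentiableOn (Filter.Eventually.of_forall hdiff) Metric.isOpen_ball
    have hga : AnalyticAt ℂ (fun w => ∑' j, if True then tm q j w else 0) z :=
      hg.analyticAt (Metric.ball_mem_nhds z hr0)
    rw [hF, hterm']
    exact ((hEdiff.analyticAt z).mul (by simpa using hga))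
  refine ⟨?_, han, hconv⟩
  -- Part 1: meromorphy
  intro z _
  by_cases hzS : z ∈ S
  · -- z is a potential pole
    rw [hSS] at hzS
    obtain ⟨m, n, hzpt⟩ := hzS
    obtain ⟨ε, hε0, hεiso⟩ := isolated hq0 hq1 z
    have hr0 : 0 < ε / 2 := by linarith
    set K := Metric.closedBall z (ε/2) with hKdef
    have hKd : ∀ w ∈ K, ∀ j : ℕ, j ≠ m →
        1 - Complex.exp ((w - 1 / 2 + (j : ℂ)) * Real.log q) ≠ 0 := by
      intro w hw j hj h0
      obtain ⟨n', hn'⟩ := (d_eq_zero_iff hq0 hq1 j w).1 h0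
      rcases eq_or_ne w z with rfl | hwz
      · have hne : (m, n) ≠ (j, n') := by
          intro he
          exact hj (by simpa using (Prod.ext_iff.1 he).1.symm)
        have hsep := pt_sep hq0 hq1 hne
        have : pt q m n = pt q j n' := by rw [← hzpt]; exact hn'
        rw [this, dist_self] at hsep
        have := rho_pos hq0 hq1
        linarith
      · have hwS : w ∈ SS q := ⟨j, n', hn'⟩
        have := hεiso w hwS hwz
        rw [hKdef, Metric.mem_closedBall, dist_comm] at hw
        linarith
    have hu2 := unif hq0 hq1 (fun j => j ≠ m) K (isCompact_closedBall _ _) hKd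
    -- analyticity of the sum with the m-th term removed
    have hlu := (hu2.1.mono Metric.ball_subset_closedBall).tendstoLocallyUniformlyOn
    have hdiff : ∀ N : ℕ, DifferentiableOn ℂ
        (fun w => ∑ j ∈ Finset.range N, if j ≠ m then tm q j w else 0)
        (Metric.ball z (ε/2)) := by
      intro N w hw
      apply DifferentiableAt.differentiableWithinAt
      apply DifferentiableAt.fun_sum
      intro j _
      by_cases hj : j = m
      · simp [hj]
      · simp only [if_pos hj]
        exact tm_differentiableAt hq0 hq1 j
          (hKd w (Metric.ball_subset_closedBall hw) j hj)
    have hgd := hlu.differentiableOn (Filter.Eventually.of_forall hdiff) Metric.isOpen_ball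
    have hga : AnalyticAt ℂ (fun w => ∑' j, if j ≠ m then tm q j w else 0) z :=
      hgd.analyticAt (Metric.ball_mem_nhds z hr0)
    -- pointwise splitting of the sum
    have hsplit : ∀ w ∈ K, ∑' j, tm q j w =
        (∑' j, if j ≠ m then tm q j w else 0) + tm q m w := by
      intro w hw
      have hs2 : Summable (fun j => if j ≠ m then tm q j w else 0) := hu2.2 w hw
      have hs3 : Summable (fun j : ℕ => if j = m then tm q j w else 0) :=
        summable_of_ne_finset_zero (s := {m}) (fun b hb => if_neg (by simpa using hb))
      have heqf : (fun j => tm q j w) =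
          fun j => (if j ≠ m then tm q j w else 0) + (if j = m then tm q j w else 0) := by
        funext j
        by_cases h : j = m <;> simp [h]
      rw [heqf, Summable.tsum_add hs2 hs3, tsum_eq_single m (fun b hb => if_neg hb)]
      simp
    -- meromorphy of the m-th term
    have htmm : MeromorphicAt (tm q m) z := by
      have hnum : Differentiable ℂ (fun w : ℂ =>
          (∏ i ∈ Finset.range m, (w + (i : ℂ))) / (m.factorial : ℂ) *
          ((Complex.exp ((w - 1 / 2 + (m : ℂ)) * Real.log q) +
              Complex.exp (((m : ℂ) + 1 / 2) * Real.log q)) *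
            (1 - Complex.exp ((2 * (m : ℂ) + w) * Real.log q)))) := by
        apply Differentiable.mul
        · apply Differentiable.div_const
          intro w
          exact DifferentiableAt.fun_finsetProd fun i _ => differentiableAt_id.add_const _
        · apply Differentiable.mul
          · exact (((differentiable_id.sub_const _).add_const _).mul_const _).cexp.add_const _
          · exact Differentiable.const_sub ((differentiable_id.const_add _).mul_const _).cexp _
      have hden : Differentiable ℂ (fun w : ℂ =>
          (1 - Complex.exp ((w - 1 / 2 + (m : ℂ)) * Real.log q)) ^ 2 *
          (1 - Complex.exp (((m : ℂ) + 1 / 2) * Real.log q)) ^ 2) := by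
        apply Differentiable.mul_const
        apply Differentiable.pow
        exact Differentiable.const_sub (((differentiable_id.sub_const _).add_const _).mul_const _).cexp _
      exact ((hnum.analyticAt z).meromorphicAt.div ((hden.analyticAt z).meromorphicAt))
    -- assemble
    have hmodel : MeromorphicAt (fun w => Complex.exp (w * Real.log (q⁻¹ - q)) *
        ((∑' j, if j ≠ m then tm q j w else 0) + tm q m w)) z :=
      ((hEdiff.analyticAt z).meromorphicAt.mul (hga.meromorphicAt.add htmm))
    have hev : (fun w => Complex.exp (w * Real.log (q⁻¹ - q)) *
        ((∑' j, if j ≠ m then tm q j w else 0) + tm q m w)) =ᶠ[nhds z] F := by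
      filter_upwards [Metric.closedBall_mem_nhds z hr0] with w hw
      rw [hF, hterm']
      simp only
      rw [hsplit w hw]
    exact hmodel.congr (hev.filter_mono nhdsWithin_le_nhds)
  · exact (han z hzS).meromorphicAt
end

section
/- For q ∈ (0,1) and s > 0, the weighted sum ∑_{l=0,1/2,1,…} ∑_{n=-l-1/2}^{l+1/2} 2(2l+1) q^{sn} (1 + [l+1/2]_q^2 q^{2n})^{-r/2} is finite for all real r > s/2 and infinite for r = s/2 (summation over half-integer steps, [x]_q = (q^{-x}-q^x)/(q-q^{-1})). -/
open Finset

private lemma aux_term_nonneg {q : ℝ} (hq0 : 0 < q) (a e1 y e2 e3 : ℝ) (ha : 0 ≤ a) :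
    0 ≤ a * q ^ e1 * (1 + y ^ 2 * q ^ e2) ^ e3 := by
  have h1 : (0:ℝ) < q ^ e1 := Real.rpow_pos_of_pos hq0 _
  have h2 : (0:ℝ) < 1 + y ^ 2 * q ^ e2 := by
    have h3 : (0:ℝ) < q ^ e2 := Real.rpow_pos_of_pos hq0 _
    nlinarith [sq_nonneg y]
  have h4 : (0:ℝ) < (1 + y ^ 2 * q ^ e2) ^ e3 := Real.rpow_pos_of_pos h2 _
  positivity

private lemma aux_sq_rpow {P t : ℝ} (hP : 0 ≤ P) : (P ^ 2) ^ (-t / 2) = P ^ (-t) := by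
  rw [← Real.rpow_natCast P 2, ← Real.rpow_mul hP]
  congr 1
  push_cast
  ring

set_option maxHeartbeats 2000000 in
/-- For `q ∈ (0,1)` and `s > 0`, the weighted sum
`∑_{l ∈ ½ℕ} ∑_{n=-l-1/2}^{l+1/2} 2(2l+1) q^{sn} (1 + [l+1/2]_q² q^{2n})^{-r/2}`
(with `l = m/2`, `n = i - (m+1)/2`, `[x]_q = (q^{-x}-q^x)/(q⁻¹-q)`) is finite for every
real `r > s/2` and infinite for `r = s/2`: the spectral dimension is `s/2`. -/
theorem stmt_19 (q : ℝ) (hq0 : 0 < q) (hq1 : q < 1) (s : ℝ) (hs : 0 < s) :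
    (∀ r : ℝ, s / 2 < r →
      Summable (fun m : ℕ => ∑ i ∈ Finset.range (m + 2),
        2 * (m + 1 : ℝ) * q ^ (s * ((i : ℝ) - ((m : ℝ) + 1) / 2)) *
          (1 + ((q ^ (-(((m : ℝ) + 1) / 2)) - q ^ (((m : ℝ) + 1) / 2)) / (q⁻¹ - q)) ^ 2 *
              q ^ (2 * ((i : ℝ) - ((m : ℝ) + 1) / 2))) ^ (-r / 2))) ∧
    ¬ Summable (fun m : ℕ => ∑ i ∈ Finset.range (m + 2),
        2 * (m + 1 : ℝ) * q ^ (s * ((i : ℝ) - ((m : ℝ) + 1) / 2)) *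
          (1 + ((q ^ (-(((m : ℝ) + 1) / 2)) - q ^ (((m : ℝ) + 1) / 2)) / (q⁻¹ - q)) ^ 2 *
              q ^ (2 * ((i : ℝ) - ((m : ℝ) + 1) / 2))) ^ (-(s / 2) / 2)) := by
  have hq1' : q ≤ 1 := hq1.le
  have hdpos : 0 < q⁻¹ - q := by
    rw [inv_eq_one_div, sub_pos, lt_div_iff₀ hq0]
    nlinarith
  set d : ℝ := q⁻¹ - q with hd
  clear_value d
  have hb0 : ∀ m : ℕ, 0 ≤ (q ^ (-(((m : ℝ) + 1) / 2)) - q ^ (((m : ℝ) + 1) / 2)) / d := by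
    intro m
    apply div_nonneg _ hdpos.le
    rw [sub_nonneg]
    have h0m : (0:ℝ) ≤ (m:ℝ) := Nat.cast_nonneg m
    exact Real.rpow_le_rpow_of_exponent_ge hq0 hq1' (by linarith)
  constructor
  · -- summable part
    intro r hr
    set t := min r s with ht
    clear_value t
    have hts : t ≤ s := by rw [ht]; exact min_le_right r s
    have htr : t ≤ r := by rw [ht]; exact min_le_left r s
    have ht2 : s / 2 < t := by rw [ht]; exact lt_min hr (by linarith)
    have htpos : 0 < t := by linarith
    set c : ℝ := q / (1 + q) with hc
    clear_value c
    have hcpos : 0 < c := by rw [hc]; positivity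
    set α : ℝ := t - s / 2 with hα
    clear_value α
    have hαpos : 0 < α := by rw [hα]; linarith
    set Q : ℝ := q ^ α with hQ
    clear_value Q
    have hQpos : 0 < Q := by rw [hQ]; exact Real.rpow_pos_of_pos hq0 _
    have hQlt : Q < 1 := by rw [hQ]; exact Real.rpow_lt_one hq0.le hq1 hαpos
    -- pointwise bound on each summand
    have key : ∀ m : ℕ, ∀ i ∈ Finset.range (m + 2),
        2 * (m + 1 : ℝ) * q ^ (s * ((i : ℝ) - ((m : ℝ) + 1) / 2)) *
          (1 + ((q ^ (-(((m : ℝ) + 1) / 2)) - q ^ (((m : ℝ) + 1) / 2)) / d) ^ 2 *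
              q ^ (2 * ((i : ℝ) - ((m : ℝ) + 1) / 2))) ^ (-r / 2)
        ≤ 2 * c ^ (-t) * ((m : ℝ) + 1) * Q ^ (m + 1) := by
      intro m i _
      have h0m : (0:ℝ) ≤ (m:ℝ) := Nat.cast_nonneg m
      set L : ℝ := ((m : ℝ) + 1) / 2 with hL
      have hLpos : 0 < L := by rw [hL]; positivity
      have h2L : (m : ℝ) + 1 = 2 * L := by rw [hL]; ring
      set n : ℝ := (i : ℝ) - L with hn
      have h0i : (0:ℝ) ≤ (i:ℝ) := Nat.cast_nonneg i
      have hnL : 0 ≤ n + L := by rw [hn]; linarith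
      clear_value L n
      set b : ℝ := (q ^ (-L) - q ^ L) / d with hb
      have hbnn : 0 ≤ b := by
        rw [hb]
        apply div_nonneg _ hdpos.le
        rw [sub_nonneg]
        exact Real.rpow_le_rpow_of_exponent_ge hq0 hq1' (by linarith)
      have hq2L : q ^ (2 * L) ≤ q := by
        have h1L : (1:ℝ) ≤ 2 * L := by linarith
        have := Real.rpow_le_rpow_of_exponent_ge hq0 hq1' h1L
        simpa using this
      have hbl : c * q ^ (-L) ≤ b := by
        have hsplit : q ^ L = q ^ (-L) * q ^ (2 * L) := by
          rw [← Real.rpow_add hq0]; congr 1; ring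
        have hqLpos : (0:ℝ) < q ^ (-L) := Real.rpow_pos_of_pos hq0 _
        have hnum : q ^ (-L) * (1 - q) ≤ q ^ (-L) - q ^ L := by
          rw [hsplit]; nlinarith
        have hcd : c * d = 1 - q := by
          rw [hc, hd]; field_simp; ring
        rw [hb, le_div_iff₀ hdpos]
        calc c * q ^ (-L) * d = q ^ (-L) * (c * d) := by ring
          _ = q ^ (-L) * (1 - q) := by rw [hcd]
          _ ≤ q ^ (-L) - q ^ L := hnum
      clear_value b
      -- bound the bracket
      set A : ℝ := 1 + b ^ 2 * q ^ (2 * n) with hA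
      have hq2n : (0:ℝ) < q ^ (2 * n) := Real.rpow_pos_of_pos hq0 _
      have hA1 : 1 ≤ A := by rw [hA]; nlinarith [sq_nonneg b]
      clear_value A
      have hApos : 0 < A := by linarith
      set P : ℝ := c * q ^ (n - L) with hP
      clear_value P
      have hPpos : 0 < P := by
        rw [hP]
        have := Real.rpow_pos_of_pos hq0 (n - L); positivity
      have hPA : P ^ 2 ≤ A := by
        have hqn : (0:ℝ) < q ^ n := Real.rpow_pos_of_pos hq0 _
        have h1 : P = (c * q ^ (-L)) * q ^ n := by
          rw [hP, mul_assoc, ← Real.rpow_add hq0]; congr 2; ring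
        have h2 : P ≤ b * q ^ n := by
          rw [h1]; exact mul_le_mul_of_nonneg_right hbl hqn.le
        have h3 : (b * q ^ n) ^ 2 = b ^ 2 * q ^ (2 * n) := by
          rw [mul_pow]
          congr 1
          rw [sq, ← Real.rpow_add hq0]
          congr 1; ring
        have h4 : P ^ 2 ≤ (b * q ^ n) ^ 2 := by
          apply pow_le_pow_left₀ hPpos.le h2
        calc P ^ 2 ≤ (b * q ^ n) ^ 2 := h4
          _ = b ^ 2 * q ^ (2 * n) := h3
          _ ≤ A := by rw [hA]; linarith
      have hbr : A ^ (-r / 2) ≤ c ^ (-t) * q ^ (t * (L - n)) := by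
        have e1 : A ^ (-r / 2) = A ^ (-t / 2) * A ^ (-(r - t) / 2) := by
          rw [← Real.rpow_add hApos]; congr 1; ring
        have e2 : A ^ (-(r - t) / 2) ≤ 1 :=
          Real.rpow_le_one_of_one_le_of_nonpos hA1 (by linarith)
        have e3 : A ^ (-t / 2) ≤ (P ^ 2) ^ (-t / 2) :=
          Real.rpow_le_rpow_of_nonpos (by positivity) hPA (by linarith)
        have e4 : (P ^ 2) ^ (-t / 2) = c ^ (-t) * q ^ (t * (L - n)) := by
          rw [aux_sq_rpow hPpos.le, hP, Real.mul_rpow hcpos.le (Real.rpow_pos_of_pos hq0 _).le,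
            ← Real.rpow_mul hq0.le]
          congr 2; ring
        calc A ^ (-r / 2) = A ^ (-t / 2) * A ^ (-(r - t) / 2) := e1
          _ ≤ (P ^ 2) ^ (-t / 2) * 1 := by
              apply mul_le_mul e3 e2 (Real.rpow_pos_of_pos hApos _).le (by positivity)
          _ = c ^ (-t) * q ^ (t * (L - n)) := by rw [mul_one, e4]
      -- assemble
      have hfront : (0:ℝ) ≤ 2 * ((m:ℝ) + 1) * q ^ (s * n) := by
        have := Real.rpow_pos_of_pos hq0 (s * n); positivity
      have hexp : q ^ (s * n) * q ^ (t * (L - n)) ≤ Q ^ (m + 1) := by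
        rw [← Real.rpow_add hq0]
        have hle : α * ((m : ℝ) + 1) ≤ s * n + t * (L - n) := by
          have hprod : 0 ≤ (s - t) * (n + L) := mul_nonneg (by linarith) hnL
          have hexpand : s * n + t * (L - n) - α * ((m : ℝ) + 1) = (s - t) * (n + L) := by
            rw [h2L, hα]; ring
          linarith
        have hmono := Real.rpow_le_rpow_of_exponent_ge hq0 hq1' hle
        calc q ^ (s * n + t * (L - n)) ≤ q ^ (α * ((m:ℝ) + 1)) := hmono
          _ = Q ^ (m + 1) := by
              rw [hQ, ← Real.rpow_natCast (q ^ α) (m + 1), ← Real.rpow_mul hq0.le]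
              congr 1; push_cast; ring
      calc 2 * ((m:ℝ) + 1) * q ^ (s * n) * A ^ (-r / 2)
          ≤ 2 * ((m:ℝ) + 1) * q ^ (s * n) * (c ^ (-t) * q ^ (t * (L - n))) :=
            mul_le_mul_of_nonneg_left hbr hfront
        _ = 2 * c ^ (-t) * ((m:ℝ) + 1) * (q ^ (s * n) * q ^ (t * (L - n))) := by ring
        _ ≤ 2 * c ^ (-t) * ((m:ℝ) + 1) * Q ^ (m + 1) := by
            apply mul_le_mul_of_nonneg_left hexp
            have := Real.rpow_pos_of_pos hcpos (-t); positivity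
    -- summable majorant
    have hsum2 : Summable (fun m : ℕ => (((m:ℝ) + 2)) ^ 2 * Q ^ (m + 2)) := by
      have h := summable_pow_mul_geometric_of_norm_lt_one (R := ℝ) 2
        (r := Q) (by rw [Real.norm_eq_abs, abs_of_pos hQpos]; exact hQlt)
      have h2 := (summable_nat_add_iff 2).mpr h
      apply h2.congr
      intro m; push_cast; ring
    apply Summable.of_nonneg_of_le
      (f := fun m : ℕ => (2 * c ^ (-t) / Q) * (((m:ℝ) + 2) ^ 2 * Q ^ (m + 2)))
    · intro m
      apply Finset.sum_nonneg
      intro i _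
      exact aux_term_nonneg hq0 _ _ _ _ _ (by positivity)
    · intro m
      calc (∑ i ∈ Finset.range (m + 2),
            2 * (m + 1 : ℝ) * q ^ (s * ((i : ℝ) - ((m : ℝ) + 1) / 2)) *
              (1 + ((q ^ (-(((m : ℝ) + 1) / 2)) - q ^ (((m : ℝ) + 1) / 2)) / d) ^ 2 *
                  q ^ (2 * ((i : ℝ) - ((m : ℝ) + 1) / 2))) ^ (-r / 2))
          ≤ (Finset.range (m + 2)).card • (2 * c ^ (-t) * ((m:ℝ) + 1) * Q ^ (m + 1)) :=
            Finset.sum_le_card_nsmul _ _ _ (key m)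
        _ = ((m:ℝ) + 2) * (2 * c ^ (-t) * ((m:ℝ) + 1) * Q ^ (m + 1)) := by
            rw [Finset.card_range, nsmul_eq_mul]; push_cast; ring
        _ ≤ (2 * c ^ (-t) / Q) * (((m:ℝ) + 2) ^ 2 * Q ^ (m + 2)) := by
            have hct : (0:ℝ) < c ^ (-t) := Real.rpow_pos_of_pos hcpos _
            have hQm : (0:ℝ) < Q ^ (m + 1) := pow_pos hQpos _
            have h1 : ((m:ℝ) + 1) ≤ ((m:ℝ) + 2) := by linarith
            have h0m : (0:ℝ) ≤ (m:ℝ) := Nat.cast_nonneg m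
            have h2 : Q ^ (m + 2) = Q ^ (m + 1) * Q := pow_succ Q (m + 1)
            rw [h2, div_mul_eq_mul_div, le_div_iff₀ hQpos]
            have h3 : ((m:ℝ) + 2) * ((m:ℝ) + 1) ≤ ((m:ℝ) + 2) ^ 2 := by nlinarith
            have h4 : (0:ℝ) ≤ 2 * c ^ (-t) * Q ^ (m + 1) * Q := by positivity
            linarith [mul_le_mul_of_nonneg_left h3 h4]
    · exact hsum2.mul_left _
  · -- not summable part
    intro hsum
    set e : ℝ := -(s / 2) / 2 with he
    clear_value e
    have hepos : e < 0 := by rw [he]; linarith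
    set D : ℝ := 1 + (d⁻¹) ^ 2 with hD
    clear_value D
    have hDpos : 0 < D := by rw [hD]; positivity
    set ε : ℝ := 2 * D ^ e with hε
    clear_value ε
    have hεpos : 0 < ε := by
      rw [hε]
      have := Real.rpow_pos_of_pos hDpos e; positivity
    have hlow : ∀ m : ℕ, ε ≤ ∑ i ∈ Finset.range (m + 2),
        2 * (m + 1 : ℝ) * q ^ (s * ((i : ℝ) - ((m : ℝ) + 1) / 2)) *
          (1 + ((q ^ (-(((m : ℝ) + 1) / 2)) - q ^ (((m : ℝ) + 1) / 2)) / d) ^ 2 *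
              q ^ (2 * ((i : ℝ) - ((m : ℝ) + 1) / 2))) ^ e := by
      intro m
      have h0m : (0:ℝ) ≤ (m:ℝ) := Nat.cast_nonneg m
      set L : ℝ := ((m : ℝ) + 1) / 2 with hL
      have hLpos : 0 < L := by rw [hL]; positivity
      clear_value L
      set b : ℝ := (q ^ (-L) - q ^ L) / d with hb
      have hbnn : 0 ≤ b := by
        rw [hb]
        apply div_nonneg _ hdpos.le
        rw [sub_nonneg]
        exact Real.rpow_le_rpow_of_exponent_ge hq0 hq1' (by linarith)
      have hbu : b ≤ q ^ (-L) * d⁻¹ := by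
        rw [hb, div_eq_mul_inv]
        have hpos : (0:ℝ) < q ^ L := Real.rpow_pos_of_pos hq0 _
        have : q ^ (-L) - q ^ L ≤ q ^ (-L) := by linarith
        exact mul_le_mul_of_nonneg_right this (by positivity)
      clear_value b
      have hterm : ε ≤ 2 * (m + 1 : ℝ) * q ^ (s * (((0:ℕ) : ℝ) - L)) *
          (1 + b ^ 2 * q ^ (2 * (((0:ℕ) : ℝ) - L))) ^ e := by
        have hcast : (((0:ℕ)) : ℝ) = 0 := by norm_num
        rw [hcast]
        set A : ℝ := 1 + b ^ 2 * q ^ (2 * (0 - L)) with hA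
        have hq2 : (0:ℝ) < q ^ (2 * (0 - L)) := Real.rpow_pos_of_pos hq0 _
        have hApos : 0 < A := by rw [hA]; nlinarith [sq_nonneg b]
        have hqL : (0:ℝ) < q ^ (-L) := Real.rpow_pos_of_pos hq0 _
        have hq4 : (q ^ (-L)) ^ 2 * q ^ (2 * (0 - L)) = q ^ (-(4 * L)) := by
          rw [sq, ← Real.rpow_add hq0, ← Real.rpow_add hq0]; congr 1; ring
        have hone : (1:ℝ) ≤ q ^ (-(4 * L)) :=
          Real.one_le_rpow_of_pos_of_le_one_of_nonpos hq0 hq1' (by linarith)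
        have hAle : A ≤ D * q ^ (-(4 * L)) := by
          have h1 : b ^ 2 ≤ (q ^ (-L) * d⁻¹) ^ 2 := by nlinarith
          have hb2 : b ^ 2 * q ^ (2 * (0 - L)) ≤ (d⁻¹) ^ 2 * q ^ (-(4 * L)) := by
            calc b ^ 2 * q ^ (2 * (0 - L)) ≤ (q ^ (-L) * d⁻¹) ^ 2 * q ^ (2 * (0 - L)) :=
                  mul_le_mul_of_nonneg_right h1 hq2.le
              _ = (d⁻¹) ^ 2 * ((q ^ (-L)) ^ 2 * q ^ (2 * (0 - L))) := by ring
              _ = (d⁻¹) ^ 2 * q ^ (-(4 * L)) := by rw [hq4]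
          rw [hA, hD]
          nlinarith [sq_nonneg d⁻¹]
        clear_value A
        have hAe : D ^ e * q ^ (L * s) ≤ A ^ e := by
          have h1 : (D * q ^ (-(4 * L))) ^ e ≤ A ^ e :=
            Real.rpow_le_rpow_of_nonpos hApos hAle hepos.le
          have h2 : (D * q ^ (-(4 * L))) ^ e = D ^ e * q ^ (L * s) := by
            rw [Real.mul_rpow hDpos.le (Real.rpow_pos_of_pos hq0 _).le,
              ← Real.rpow_mul hq0.le]
            congr 2; rw [he]; ring
          rw [← h2]; exact h1
        have hfront : (0:ℝ) ≤ 2 * ((m:ℝ) + 1) * q ^ (s * (0 - L)) := by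
          have := Real.rpow_pos_of_pos hq0 (s * (0 - L)); positivity
        have hcancel : q ^ (s * (0 - L)) * q ^ (L * s) = 1 := by
          rw [← Real.rpow_add hq0]
          rw [show s * (0 - L) + L * s = 0 by ring, Real.rpow_zero]
        have hDe : (0:ℝ) < D ^ e := Real.rpow_pos_of_pos hDpos _
        calc ε = 2 * D ^ e := hε
          _ ≤ 2 * ((m:ℝ) + 1) * D ^ e * (q ^ (s * (0 - L)) * q ^ (L * s)) := by
              rw [hcancel, mul_one]
              nlinarith
          _ = 2 * ((m:ℝ) + 1) * q ^ (s * (0 - L)) * (D ^ e * q ^ (L * s)) := by ring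
          _ ≤ 2 * ((m:ℝ) + 1) * q ^ (s * (0 - L)) * A ^ e :=
              mul_le_mul_of_nonneg_left hAe hfront
      calc ε ≤ 2 * (m + 1 : ℝ) * q ^ (s * (((0:ℕ) : ℝ) - L)) *
            (1 + b ^ 2 * q ^ (2 * (((0:ℕ) : ℝ) - L))) ^ e := hterm
        _ ≤ _ := by
            apply Finset.single_le_sum (f := fun i : ℕ =>
              2 * (m + 1 : ℝ) * q ^ (s * ((i : ℝ) - L)) *
                (1 + b ^ 2 * q ^ (2 * ((i : ℝ) - L))) ^ e)
              (fun i _ => aux_term_nonneg hq0 _ _ _ _ _ (by positivity))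
            simp
    have h0 := hsum.tendsto_atTop_zero
    have hev := h0.eventually (gt_mem_nhds hεpos)
    obtain ⟨m, hm⟩ := hev.exists
    exact absurd (hlow m) (not_le.mpr hm)
end
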